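/- Fix τ' < τ, set S' = Ψ_F(S(τ')), choose t_n ∈ I(p_n/q_n), and define Φ_n = (1/q_n)∑_{k=0}^{q_n−1}(F^{∘k} − kθ) and Φ̂_n = (1/q_n)∑_{k=0}^{q_n−1}(F_{t_n}^{∘k} − k·p_n/q_n). Then there is a constant C > 0 such that for all n large enough and all z ∈ S', |Φ̂_n(z) − Φ_n(z)| ≤ C·(q_n−1)/(2q_n²); in particular sup_{S'}|Φ̂_n − Φ_n| = O(1/q_n). -/

import Mathlib

open Filter Real Set Topology

/-- The open horizontal strip `S(τ) = {z ∈ ℂ : |Im z| < τ}`. -/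
def Strip (τ : ℝ) : Set ℂ := {z : ℂ | |z.im| < τ}

/-!
In the linearizing coordinate `ζ = Ψ⁻¹ z` the iterates of `F` are the translations `ζ ↦ ζ + kθ`,
so `F^{∘k}(z) - z - kθ` is bounded uniformly in `k` on `Ψ(S(τ₁))`, `τ' < τ₁ < τ`. By periodicity
and compactness `Ψ(S(τ₁))` contains discs of a fixed radius around the points of `S'`, and Cauchy
estimates on them make all iterates `F^{∘k}` Lipschitz near `S'` with one constant `M`.
Telescoping `F_t^{∘k} - F^{∘k}` along the orbit then bounds it by `k M |t|` as long as `q M² |t|`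
stays small, which holds for `t = t_n` since `|t_n| ≤ C₃ / q_n²`. Together with
`|θ - p_n/q_n| ≤ 1/q_n²` the `k`-th terms of the two averages differ by `O(k / q_n²)`, and
`∑_{k < q_n} k = q_n (q_n - 1) / 2`.
-/

open Complex Metric Finset

lemma strip_mono {a b : ℝ} (h : a ≤ b) : Strip a ⊆ Strip b :=
  fun _ hz => lt_of_lt_of_le hz h

lemma strip_eq_preimage_im (a : ℝ) : Strip a = im ⁻¹' Ioo (-a) a := by
  ext z; simp [Strip, abs_lt]

lemma isOpen_strip (a : ℝ) : IsOpen (Strip a) := by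
  rw [strip_eq_preimage_im]; exact isOpen_Ioo.preimage continuous_im

lemma convex_strip (a : ℝ) : Convex ℝ (Strip a) := by
  rw [strip_eq_preimage_im]; exact (convex_Ioo _ _).linear_preimage imLm

lemma add_mem_strip {a : ℝ} {z w : ℂ} (hz : z ∈ Strip a) (hw : w.im = 0) : z + w ∈ Strip a := by
  simpa [Strip, hw] using hz

lemma reProdIm_subset_strip {a b : ℝ} (h : a < b) : Icc 0 1 ×ℂ Icc (-a) a ⊆ Strip b :=
  fun _ hz => (abs_le.2 (mem_reProdIm.1 hz).2).trans_lt h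

lemma sub_floor_re_mem_reProdIm {a : ℝ} {z : ℂ} (hz : z ∈ Strip a) :
    z - ⌊z.re⌋ ∈ Icc 0 1 ×ℂ Icc (-a) a := by
  refine mem_reProdIm.2 ⟨?_, by simpa using abs_le.1 hz.le⟩
  simp [Int.fract_nonneg, (Int.fract_lt_one _).le]

lemma isOpen_image_of_injOn {f : ℂ → ℂ} {U s : Set ℂ} (hU : IsOpen U) (hUc : IsPreconnected U)
    (hf : DifferentiableOn ℂ f U) (hinj : InjOn f U) (hnt : U.Nontrivial) (hsU : s ⊆ U)
    (hs : IsOpen s) : IsOpen (f '' s) := by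
  refine ((hf.analyticOnNhd hU).is_constant_or_isOpen hUc).resolve_left ?_ s hsU hs
  rintro ⟨w, hw⟩
  obtain ⟨x, hx, y, hy, hxy⟩ := hnt
  exact hxy (hinj hx hy ((hw x hx).trans (hw y hy).symm))

section Periodic

variable {Ψ : ℂ → ℂ} {τ : ℝ}

lemma map_add_intCast (hΨper : ∀ z ∈ Strip τ, Ψ (z + 1) = Ψ z + 1) {z : ℂ} (hz : z ∈ Strip τ)
    (n : ℤ) : Ψ (z + n) = Ψ z + n := by
  induction n using Int.induction_on with
  | zero => simp
  | succ n ih =>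
    have := hΨper _ (add_mem_strip hz (w := n) (by simp))
    push_cast at ih ⊢
    rw [← add_assoc, this, ih, add_assoc]
  | pred n ih =>
    have := hΨper _ (add_mem_strip hz (w := -n - 1) (by simp))
    push_cast at ih this ⊢
    rw [show z + (-n - 1 : ℂ) + 1 = z + -n by ring, ih] at this
    linear_combination -this

lemma exists_forall_norm_sub_self_le (hΨper : ∀ z ∈ Strip τ, Ψ (z + 1) = Ψ z + 1)
    (hcont : ContinuousOn Ψ (Strip τ)) {a : ℝ} (ha : a < τ) :
    ∃ A, 0 ≤ A ∧ ∀ z ∈ Strip a, ‖Ψ z - z‖ ≤ A := by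
  obtain ⟨A, hA⟩ := (isCompact_Icc.reProdIm isCompact_Icc).exists_bound_of_continuousOn
    ((hcont.mono (reProdIm_subset_strip ha)).sub continuousOn_id)
  refine ⟨max A 0, le_max_right _ _, fun z hz => ?_⟩
  have hz₀ := sub_floor_re_mem_reProdIm hz
  have hper := map_add_intCast hΨper (reProdIm_subset_strip ha hz₀) ⌊z.re⌋
  rw [sub_add_cancel] at hper
  calc ‖Ψ z - z‖ = ‖Ψ (z - ⌊z.re⌋) - (z - ⌊z.re⌋)‖ := by rw [hper]; ring_nf
    _ ≤ max A 0 := le_max_of_le_left (hA _ hz₀)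

lemma add_intCast_mem_image_strip (hΨper : ∀ z ∈ Strip τ, Ψ (z + 1) = Ψ z + 1) {a : ℝ}
    (ha : a ≤ τ) {w : ℂ} (hw : w ∈ Ψ '' Strip a) (n : ℤ) : w + n ∈ Ψ '' Strip a := by
  obtain ⟨z, hz, rfl⟩ := hw
  exact ⟨z + n, add_mem_strip hz (by simp), map_add_intCast hΨper (strip_mono ha hz) n⟩

lemma isOpen_image_strip (hτ : 0 < τ) (hΨdiff : DifferentiableOn ℂ Ψ (Strip τ))
    (hΨinj : InjOn Ψ (Strip τ)) {a : ℝ} (ha : a ≤ τ) : IsOpen (Ψ '' Strip a) :=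
  isOpen_image_of_injOn (isOpen_strip τ) (convex_strip τ).isPreconnected hΨdiff hΨinj
    ⟨0, by simpa [Strip] using hτ, 1, by simpa [Strip] using hτ, zero_ne_one⟩
    (strip_mono ha) (isOpen_strip a)

lemma exists_closedBall_subset_image_strip (hΨper : ∀ z ∈ Strip τ, Ψ (z + 1) = Ψ z + 1)
    (hcont : ContinuousOn Ψ (Strip τ)) {a b : ℝ} (hab : a < b) (hb : b ≤ τ)
    (hopen : IsOpen (Ψ '' Strip b)) :
    ∃ r > 0, ∀ z ∈ Strip a, closedBall (Ψ z) r ⊆ Ψ '' Strip b := by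
  have hK := (isCompact_Icc.reProdIm isCompact_Icc).image_of_continuousOn
    (hcont.mono ((reProdIm_subset_strip hab).trans (strip_mono hb)))
  obtain ⟨r, hr, hrK⟩ :=
    hK.exists_cthickening_subset_open hopen (image_mono (reProdIm_subset_strip hab))
  refine ⟨r, hr, fun z hz v hv => ?_⟩
  have hz₀ := sub_floor_re_mem_reProdIm hz
  have hper := map_add_intCast hΨper
    ((reProdIm_subset_strip hab).trans (strip_mono hb) hz₀) ⌊z.re⌋
  rw [sub_add_cancel] at hper
  have hv₀ : v - ⌊z.re⌋ ∈ closedBall (Ψ (z - ⌊z.re⌋)) r := by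
    rw [mem_closedBall, dist_eq_norm] at hv ⊢
    rw [hper] at hv
    convert hv using 2; ring
  simpa using add_intCast_mem_image_strip hΨper hb
    (hrK (closedBall_subset_cthickening (mem_image_of_mem _ hz₀) r hv₀)) ⌊z.re⌋

end Periodic

lemma norm_deriv_le_of_norm_sub_sub_le {f : ℂ → ℂ} {x v : ℂ} {R B : ℝ}
    (hf : DifferentiableOn ℂ f (ball x R)) (hR : 0 < R)
    (hB : ∀ y ∈ ball x R, ‖f y - y - v‖ ≤ B) : ‖deriv f x‖ ≤ 1 + 2 * B / R := by
  set φ : ℂ → ℂ := fun y => f y - y - v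
  have hφ : MapsTo φ (ball x R) (closedBall (φ x) (2 * B)) := fun y hy => by
    rw [mem_closedBall, dist_eq_norm]
    linarith [norm_sub_le (φ y) (φ x), hB y hy, hB x (mem_ball_self hR)]
  have hfx : DifferentiableAt ℂ f x := hf.differentiableAt (ball_mem_nhds x hR)
  have hderiv : deriv φ x = deriv f x - 1 := by
    simp only [φ, deriv_sub_const, deriv_fun_sub hfx differentiableAt_fun_id, deriv_id'']
  calc ‖deriv f x‖ = ‖deriv φ x + 1‖ := by rw [hderiv, sub_add_cancel]
    _ ≤ ‖deriv φ x‖ + 1 := by simpa using norm_add_le (deriv φ x) 1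
    _ ≤ 2 * B / R + 1 := by
      gcongr
      exact norm_deriv_le_div_of_mapsTo_ball ((hf.sub differentiableOn_id).sub_const v) hφ hR
    _ = 1 + 2 * B / R := add_comm _ _

lemma norm_sub_le_of_norm_sub_sub_le {f : ℂ → ℂ} {c v : ℂ} {r B : ℝ}
    (hf : DifferentiableOn ℂ f (closedBall c r)) (hr : 0 < r)
    (hB : ∀ y ∈ closedBall c r, ‖f y - y - v‖ ≤ B) {x y : ℂ}
    (hx : x ∈ closedBall c (r / 2)) (hy : y ∈ closedBall c (r / 2)) :
    ‖f x - f y‖ ≤ (1 + 2 * B / (r / 2)) * ‖x - y‖ := by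
  have hball : ∀ x ∈ closedBall c (r / 2), ball x (r / 2) ⊆ closedBall c r := fun x hx =>
    (ball_subset_ball' (by rw [mem_closedBall] at hx; linarith)).trans ball_subset_closedBall
  have hnhds : ∀ x ∈ closedBall c (r / 2), closedBall c r ∈ 𝓝 x := fun x hx =>
    mem_of_superset (ball_mem_nhds x (half_pos hr)) (hball x hx)
  exact (convex_closedBall c (r / 2)).norm_image_sub_le_of_norm_deriv_le
    (fun z hz => hf.differentiableAt (hnhds z hz))
    (fun z hz => norm_deriv_le_of_norm_sub_sub_le (hf.mono (hball z hz)) (half_pos hr)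
      (fun y hy => hB y (hball z hz hy))) hy hx

section Linearization

variable {Ψ Fc : ℂ → ℂ} {τ θ : ℝ}

lemma iterate_apply_eq (hFclin : ∀ z ∈ Strip τ, Fc (Ψ z) = Ψ (z + θ)) {z : ℂ}
    (hz : z ∈ Strip τ) (m : ℕ) : Fc^[m] (Ψ z) = Ψ (z + m * θ) := by
  induction m with
  | zero => simp
  | succ m ih =>
    rw [Function.iterate_succ_apply', ih, hFclin _ (add_mem_strip hz (by simp))]
    push_cast
    ring_nf

lemma mapsTo_image_strip (hFclin : ∀ z ∈ Strip τ, Fc (Ψ z) = Ψ (z + θ)) {a : ℝ} (ha : a ≤ τ) :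
    MapsTo Fc (Ψ '' Strip a) (Ψ '' Strip a) := by
  rintro _ ⟨z, hz, rfl⟩
  rw [hFclin z (strip_mono ha hz)]
  exact mem_image_of_mem _ (add_mem_strip hz (by simp))

lemma norm_iterate_sub_sub_le (hFclin : ∀ z ∈ Strip τ, Fc (Ψ z) = Ψ (z + θ)) {a A : ℝ}
    (ha : a ≤ τ) (hA : ∀ z ∈ Strip a, ‖Ψ z - z‖ ≤ A) {w : ℂ} (hw : w ∈ Ψ '' Strip a) (m : ℕ) :
    ‖Fc^[m] w - w - m * θ‖ ≤ 2 * A := by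
  obtain ⟨z, hz, rfl⟩ := hw
  have hzm : z + m * θ ∈ Strip a := add_mem_strip hz (by simp)
  rw [iterate_apply_eq hFclin (strip_mono ha hz)]
  calc ‖Ψ (z + m * θ) - Ψ z - m * θ‖ = ‖(Ψ (z + m * θ) - (z + m * θ)) - (Ψ z - z)‖ := by ring_nf
    _ ≤ A + A := (norm_sub_le _ _).trans (add_le_add (hA _ hzm) (hA _ hz))
    _ = 2 * A := by ring

lemma exists_lipschitz_iterate (hτ : 0 < τ) (hΨdiff : DifferentiableOn ℂ Ψ (Strip τ))
    (hΨinj : InjOn Ψ (Strip τ)) (hΨper : ∀ z ∈ Strip τ, Ψ (z + 1) = Ψ z + 1)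
    (hFcdiff : DifferentiableOn ℂ Fc (Ψ '' Strip τ))
    (hFclin : ∀ z ∈ Strip τ, Fc (Ψ z) = Ψ (z + θ)) {τ' : ℝ} (hτ'τ : τ' < τ) :
    ∃ M r : ℝ, 1 ≤ M ∧ 0 < r ∧ ∀ c ∈ Ψ '' Strip τ', ∀ m : ℕ, ∀ x ∈ closedBall c r,
      ∀ y ∈ closedBall c r, ‖Fc^[m] x - Fc^[m] y‖ ≤ M * ‖x - y‖ := by
  obtain ⟨τ₁, hτ'τ₁, hτ₁τ⟩ := exists_between hτ'τ
  have hτ₁ := hτ₁τ.le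
  obtain ⟨A, hA₀, hA⟩ := exists_forall_norm_sub_self_le hΨper hΨdiff.continuousOn hτ₁τ
  obtain ⟨r, hr, hball⟩ := exists_closedBall_subset_image_strip hΨper hΨdiff.continuousOn
    hτ'τ₁ hτ₁ (isOpen_image_strip hτ hΨdiff hΨinj hτ₁)
  refine ⟨1 + 2 * (2 * A) / (r / 2), r / 2, le_add_of_nonneg_right (by positivity),
    by positivity, ?_⟩
  rintro _ ⟨z, hz, rfl⟩ m x hx y hy
  have hdiff : DifferentiableOn ℂ Fc^[m] (Ψ '' Strip τ) :=
    hFcdiff.iterate (mapsTo_image_strip hFclin le_rfl) m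
  exact norm_sub_le_of_norm_sub_sub_le
    (hdiff.mono ((hball z hz).trans (image_mono (strip_mono hτ₁)))) hr
    (fun w hw => norm_iterate_sub_sub_le hFclin hτ₁ hA (hball z hz hw) m) hx hy

end Linearization

section Perturbation

variable {E : Type*} [SeminormedAddCommGroup E] {f g : E → E} {K : Set E} {M r ε : ℝ}

lemma norm_iterate_apply_sub_iterate_apply_le (hfK : MapsTo f K K) (hM : 0 ≤ M)
    (hlip : ∀ c ∈ K, ∀ m : ℕ, ∀ x ∈ closedBall c r, ∀ y ∈ closedBall c r,
      ‖f^[m] x - f^[m] y‖ ≤ M * ‖x - y‖)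
    (hg : ∀ x, ‖g x - f x‖ ≤ ε) {c x : E} (hc : c ∈ K) (hxc : ‖x - c‖ ≤ r)
    (hfxc : M * ‖x - c‖ + ε ≤ r) (m : ℕ) :
    ‖f^[m] (g x) - f^[m] (f x)‖ ≤ M * ε := by
  have hx : x ∈ closedBall c r := by rwa [mem_closedBall, dist_eq_norm]
  have hfx : ‖f x - f c‖ ≤ M * ‖x - c‖ := by
    simpa using hlip c hc 1 x hx c (mem_closedBall_self ((norm_nonneg _).trans hxc))
  have hfx_mem : f x ∈ closedBall (f c) r := by
    rw [mem_closedBall, dist_eq_norm]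
    linarith [(norm_nonneg _).trans (hg x)]
  have hgx_mem : g x ∈ closedBall (f c) r := by
    rw [mem_closedBall, dist_eq_norm]
    calc ‖g x - f c‖ ≤ ‖g x - f x‖ + ‖f x - f c‖ := norm_sub_le_norm_sub_add_norm_sub _ _ _
      _ ≤ r := by linarith [hg x]
  calc ‖f^[m] (g x) - f^[m] (f x)‖ ≤ M * ‖g x - f x‖ := hlip _ (hfK hc) m _ hgx_mem _ hfx_mem
    _ ≤ M * ε := by gcongr; exact hg x

theorem norm_iterate_sub_iterate_le (hfK : MapsTo f K K) (hM : 1 ≤ M)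
    (hlip : ∀ c ∈ K, ∀ m : ℕ, ∀ x ∈ closedBall c r, ∀ y ∈ closedBall c r,
      ‖f^[m] x - f^[m] y‖ ≤ M * ‖x - y‖)
    (hg : ∀ x, ‖g x - f x‖ ≤ ε) {q : ℕ} (hsmall : (q * M ^ 2 + 1) * ε ≤ r) {w : E}
    (hw : w ∈ K) (k : ℕ) (hk : k ≤ q) : ‖g^[k] w - f^[k] w‖ ≤ k * M * ε := by
  have hε : 0 ≤ ε := (norm_nonneg _).trans (hg w)
  induction k using Nat.strong_induction_on with
  | _ k ih =>
  have hterm : ∀ j ∈ range k,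
      ‖f^[k - (j + 1)] (g^[j + 1] w) - f^[k - j] (g^[j] w)‖ ≤ M * ε := by
    intro j hj
    have hjk := mem_range.1 hj
    have hdist := ih j hjk (hjk.trans_le hk).le
    have hjq : (j : ℝ) ≤ q := by exact_mod_cast (hjk.trans_le hk).le
    have hjM : (j * M ^ 2 + 1) * ε ≤ r := le_trans (by gcongr) hsmall
    rw [show k - j = k - (j + 1) + 1 by omega, Function.iterate_succ_apply f,
      Function.iterate_succ_apply' g]
    refine norm_iterate_apply_sub_iterate_apply_le hfK (by linarith) hlip hg
      (hfK.iterate j hw) ?_ ?_ _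
    · have : (j : ℝ) * M * ε ≤ j * M ^ 2 * ε := by gcongr; nlinarith
      nlinarith
    · nlinarith
  calc ‖g^[k] w - f^[k] w‖
      = ‖∑ j ∈ range k, (f^[k - (j + 1)] (g^[j + 1] w) - f^[k - j] (g^[j] w))‖ := by
        rw [sum_range_sub (fun j => f^[k - j] (g^[j] w))]; simp
    _ ≤ ∑ _j ∈ range k, M * ε := norm_sum_le_of_le _ hterm
    _ = k * M * ε := by rw [sum_const, card_range, nsmul_eq_mul, mul_assoc]

end Perturbation

lemma sum_range_natCast (q : ℕ) : ∑ k ∈ range q, (k : ℝ) = q * (q - 1) / 2 := by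
  induction q with
  | zero => simp
  | succ n ih => rw [sum_range_succ, ih]; push_cast; ring

lemma norm_average_sub_average_le {f : ℂ → ℂ} {K : Set ℂ} {M r C θ s : ℝ} {p : ℤ} {q : ℕ}
    (hfK : MapsTo f K K) (hM : 1 ≤ M)
    (hlip : ∀ c ∈ K, ∀ m : ℕ, ∀ x ∈ closedBall c r, ∀ y ∈ closedBall c r,
      ‖f^[m] x - f^[m] y‖ ≤ M * ‖x - y‖)
    (hθ : |θ - p / q| ≤ 1 / q ^ 2) (hs : |s| ≤ C / q ^ 2)
    (hsmall : (q * M ^ 2 + 1) * |s| ≤ r) {z : ℂ} (hz : z ∈ K) :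
    ‖(q : ℂ)⁻¹ * ∑ k ∈ range q, ((fun w => f w + s)^[k] z - k * ((p : ℂ) / q))
      - (q : ℂ)⁻¹ * ∑ k ∈ range q, (f^[k] z - k * θ)‖
      ≤ (M * C + 1) * (q - 1) / (2 * q ^ 2) := by
  have hterm : ∀ k ∈ range q, ‖((fun w => f w + s)^[k] z - k * ((p : ℂ) / q))
      - (f^[k] z - k * θ)‖ ≤ k * ((M * C + 1) / q ^ 2) := by
    intro k hk
    have hiter := norm_iterate_sub_iterate_le (g := fun w => f w + s) hfK hM hlip
      (fun x => by simp) hsmall hz k (mem_range.1 hk).le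
    have hrat : ‖(k : ℂ) * ((p : ℂ) / q - θ)‖ = k * |θ - p / q| := by
      rw [norm_mul, Complex.norm_natCast, abs_sub_comm, ← Real.norm_eq_abs, ← Complex.norm_real]
      push_cast; rfl
    calc ‖((fun w => f w + s)^[k] z - k * ((p : ℂ) / q)) - (f^[k] z - k * θ)‖
        = ‖((fun w => f w + s)^[k] z - f^[k] z) - k * ((p : ℂ) / q - θ)‖ := by
          congr 1; ring
      _ ≤ k * M * |s| + k * |θ - p / q| := by
        rw [← hrat]; exact (norm_sub_le _ _).trans (add_le_add_left hiter _)
      _ ≤ k * M * (C / q ^ 2) + k * (1 / q ^ 2) := by gcongr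
      _ = k * ((M * C + 1) / q ^ 2) := by ring
  rw [← mul_sub, ← sum_sub_distrib, norm_mul, norm_inv, Complex.norm_natCast]
  calc (q : ℝ)⁻¹ * ‖∑ k ∈ range q, (((fun w => f w + s)^[k] z - k * ((p : ℂ) / q))
        - (f^[k] z - k * θ))‖
      ≤ (q : ℝ)⁻¹ * ∑ k ∈ range q, k * ((M * C + 1) / q ^ 2) := by
        gcongr; exact norm_sum_le_of_le _ hterm
    _ = (M * C + 1) * (q - 1) / (2 * q ^ 2) := by
        rw [← sum_mul, sum_range_natCast]; field_simp

lemma eventually_natCast_mul_add_one_mul_le {q : ℕ → ℕ} {s : ℕ → ℝ} {C K r : ℝ}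
    (hq : Tendsto q atTop atTop) (hs : ∀ n, |s n| ≤ C / q n ^ 2)
    (hK : 0 ≤ K) (hr : 0 < r) : ∀ᶠ n in atTop, (q n * K + 1) * |s n| ≤ r := by
  have hlim : Tendsto (fun n => (K + 1) * C * (q n : ℝ)⁻¹) atTop (𝓝 0) := by
    simpa using (tendsto_inv_atTop_zero.comp (tendsto_natCast_atTop_atTop.comp hq)).const_mul
      ((K + 1) * C)
  filter_upwards [(tendsto_order.1 hlim).2 r hr, hq.eventually_ge_atTop 1] with n hn hqn
  have hq1 : (1 : ℝ) ≤ q n := by exact_mod_cast hqn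
  calc (q n * K + 1) * |s n| ≤ (q n * K + q n) * (C / q n ^ 2) := by gcongr; exact hs n
    _ = (K + 1) * C * (q n : ℝ)⁻¹ := by field_simp
    _ ≤ r := hn.le

lemma mul_sub_one_div_two_mul_sq_le_div {C : ℝ} (hC : 0 ≤ C) (q : ℕ) :
    C * (q - 1) / (2 * q ^ 2) ≤ C / q := by
  rcases q.eq_zero_or_pos with rfl | hq
  · simp
  have hq : (0 : ℝ) < q := by exact_mod_cast hq
  rw [div_le_div_iff₀ (by positivity) hq]
  nlinarith

theorem dist_averaged_linearizers_bigO_inv_qn_general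
    (θ : ℝ)
    -- Herman strip of modulus `2τ`
    (τ : ℝ) (hτ : 0 < τ)
    (Ψ : ℂ → ℂ)
    (hΨdiff : DifferentiableOn ℂ Ψ (Strip τ))
    (hΨinj : Set.InjOn Ψ (Strip τ))
    (hΨper : ∀ z ∈ Strip τ, Ψ (z + 1) = Ψ z + 1)
    (Fc : ℂ → ℂ)
    (hFcdiff : DifferentiableOn ℂ Fc (Ψ '' Strip τ))
    (hFclin : ∀ z ∈ Strip τ, Fc (Ψ z) = Ψ (z + (θ : ℂ)))
    -- `0 < τ' < τ`
    (τ' : ℝ) (hτ'τ : τ' < τ)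
    -- continued fraction convergents `p_n/q_n` of `θ`
    (pn : ℕ → ℤ) (qn : ℕ → ℕ)
    (hqtend : Tendsto qn atTop atTop)
    (hconv : ∀ n, |θ - (pn n : ℝ) / (qn n : ℝ)| ≤ 1 / (qn n : ℝ) ^ 2)
    -- parameters `t_n ∈ I(p_n/q_n)`, with the bound coming from Herman's theorem
    (t : ℕ → ℝ)
    (C₃ : ℝ) (hC₃ : 0 < C₃)
    (htbound : ∀ n, |t n| ≤ C₃ * |θ - (pn n : ℝ) / (qn n : ℝ)|)
    -- the averaged maps `Φ_n` and `Φ̂_n`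
    (Φn : ℕ → ℂ → ℂ)
    (hΦn : ∀ n z, Φn n z = ((qn n : ℂ))⁻¹ *
      ∑ k ∈ Finset.range (qn n), (Fc^[k] z - (k : ℂ) * (θ : ℂ)))
    (Φhat : ℕ → ℂ → ℂ)
    (hΦhat : ∀ n z, Φhat n z = ((qn n : ℂ))⁻¹ *
      ∑ k ∈ Finset.range (qn n),
        ((fun w : ℂ => Fc w + ((t n : ℝ) : ℂ))^[k] z
          - (k : ℂ) * (((pn n : ℤ) : ℂ) / ((qn n : ℕ) : ℂ)))) :
    ∃ C : ℝ, 0 < C ∧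
      (∃ N : ℕ, ∀ n ≥ N, ∀ z ∈ Ψ '' Strip τ',
        ‖Φhat n z - Φn n z‖ ≤ C * ((qn n : ℝ) - 1) / (2 * (qn n : ℝ) ^ 2)) ∧
      ∃ C' : ℝ, 0 < C' ∧ ∃ N : ℕ, ∀ n ≥ N, ∀ z ∈ Ψ '' Strip τ',
        ‖Φhat n z - Φn n z‖ ≤ C' / (qn n : ℝ) := by
  obtain ⟨M, r, hM, hr, hlip⟩ :=
    exists_lipschitz_iterate hτ hΨdiff hΨinj hΨper hFcdiff hFclin hτ'τ
  have ht : ∀ n, |t n| ≤ C₃ / (qn n : ℝ) ^ 2 := fun n =>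
    (htbound n).trans <| (mul_le_mul_of_nonneg_left (hconv n) hC₃.le).trans_eq (mul_one_div _ _)
  obtain ⟨N, hN⟩ := eventually_atTop.1 <|
    eventually_natCast_mul_add_one_mul_le hqtend ht (sq_nonneg M) hr
  have hC : 0 < M * C₃ + 1 := by positivity
  have hbound : ∀ n ≥ N, ∀ z ∈ Ψ '' Strip τ',
      ‖Φhat n z - Φn n z‖ ≤ (M * C₃ + 1) * ((qn n : ℝ) - 1) / (2 * (qn n : ℝ) ^ 2) :=
    fun n hn z hz => by
      rw [hΦhat, hΦn]
      exact norm_average_sub_average_le (mapsTo_image_strip hFclin hτ'τ.le) hM hlip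
        (hconv n) (ht n) (hN n hn) hz
  exact ⟨_, hC, ⟨N, hbound⟩, _, hC, N, fun n hn z hz =>
    (hbound n hn z hz).trans (mul_sub_one_div_two_mul_sq_le_div hC.le _)⟩

/-- The computation in the proof of Lemma 4 of the paper: with
`Φ_n = (1/q_n) ∑_{k<q_n} (F^{∘k} - kθ)` and
`Φ̂_n = (1/q_n) ∑_{k<q_n} (F_{t_n}^{∘k} - k p_n/q_n)`, there is a constant
`C > 0` such that `|Φ̂_n(z) - Φ_n(z)| ≤ C (q_n - 1)/(2 q_n²)` on `S' = Ψ_F(S(τ'))`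
for `n` large; in particular `sup_{S'} |Φ̂_n - Φ_n| = O(1/q_n)`. -/
theorem dist_averaged_linearizers_bigO_inv_qn
    (F : ℝ → ℝ)
    (hFanal : ∀ x : ℝ, AnalyticAt ℝ F x)
    (hFmono : StrictMono F)
    (hFbij : Function.Bijective F)
    (hFderiv : ∀ x : ℝ, 0 < deriv F x)
    (hFper : ∀ x : ℝ, F (x + 1) = F x + 1)
    -- translation numbers of the translated family `F_t = F + t`
    (T : ℝ → ℝ)
    (hT : ∀ t x : ℝ, Tendsto (fun n : ℕ => ((fun y => F y + t)^[n] x - x) / n)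
      atTop (𝓝 (T t)))
    (θ : ℝ) (hθ : T 0 = θ) (hirr : Irrational θ)
    -- Herman strip of modulus `2τ`
    (τ : ℝ) (hτ : 0 < τ)
    (Φ : ℝ → ℝ) (hΦmono : StrictMono Φ)
    (hΦper : ∀ x : ℝ, Φ (x + 1) = Φ x + 1)
    (hΦconj : ∀ x : ℝ, Φ (F x) = Φ x + θ)
    (Ψ : ℂ → ℂ)
    (hΨΦ : ∀ x : ℝ, Ψ ((Φ x : ℝ) : ℂ) = (x : ℂ))
    (hΨdiff : DifferentiableOn ℂ Ψ (Strip τ))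
    (hΨinj : Set.InjOn Ψ (Strip τ))
    (hΨper : ∀ z ∈ Strip τ, Ψ (z + 1) = Ψ z + 1)
    (Fc : ℂ → ℂ)
    (hFcreal : ∀ x : ℝ, Fc (x : ℂ) = ((F x : ℝ) : ℂ))
    (hFcdiff : DifferentiableOn ℂ Fc (Ψ '' Strip τ))
    (hFcper : ∀ z ∈ Ψ '' Strip τ, Fc (z + 1) = Fc z + 1)
    (hFclin : ∀ z ∈ Strip τ, Fc (Ψ z) = Ψ (z + (θ : ℂ)))
    -- `0 < τ' < τ`
    (τ' : ℝ) (hτ'pos : 0 < τ') (hτ'τ : τ' < τ)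
    -- continued fraction convergents `p_n/q_n` of `θ`
    (pn : ℕ → ℤ) (qn : ℕ → ℕ)
    (hqpos : ∀ n, 0 < qn n)
    (hqtend : Tendsto qn atTop atTop)
    (hcop : ∀ n, Nat.Coprime (pn n).natAbs (qn n))
    (hconv : ∀ n, |θ - (pn n : ℝ) / (qn n : ℝ)| ≤ 1 / (qn n : ℝ) ^ 2)
    -- parameters `t_n ∈ I(p_n/q_n)`, with the bound coming from Herman's theorem
    (t : ℕ → ℝ) (ht : ∀ n, T (t n) = (pn n : ℝ) / (qn n : ℝ))
    (C₃ : ℝ) (hC₃ : 0 < C₃)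
    (htbound : ∀ n, |t n| ≤ C₃ * |θ - (pn n : ℝ) / (qn n : ℝ)|)
    -- the averaged maps `Φ_n` and `Φ̂_n`
    (Φn : ℕ → ℂ → ℂ)
    (hΦn : ∀ n z, Φn n z = ((qn n : ℂ))⁻¹ *
      ∑ k ∈ Finset.range (qn n), (Fc^[k] z - (k : ℂ) * (θ : ℂ)))
    (Φhat : ℕ → ℂ → ℂ)
    (hΦhat : ∀ n z, Φhat n z = ((qn n : ℂ))⁻¹ *
      ∑ k ∈ Finset.range (qn n),
        ((fun w : ℂ => Fc w + ((t n : ℝ) : ℂ))^[k] z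
          - (k : ℂ) * (((pn n : ℤ) : ℂ) / ((qn n : ℕ) : ℂ)))) :
    ∃ C : ℝ, 0 < C ∧
      (∃ N : ℕ, ∀ n ≥ N, ∀ z ∈ Ψ '' Strip τ',
        ‖Φhat n z - Φn n z‖ ≤ C * ((qn n : ℝ) - 1) / (2 * (qn n : ℝ) ^ 2)) ∧
      ∃ C' : ℝ, 0 < C' ∧ ∃ N : ℕ, ∀ n ≥ N, ∀ z ∈ Ψ '' Strip τ',
        ‖Φhat n z - Φn n z‖ ≤ C' / (qn n : ℝ) :=
  dist_averaged_linearizers_bigO_inv_qn_general θ τ hτ Ψ hΨdiff hΨinj hΨper Fc hFcdiff hFclin τ'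
    hτ'τ pn qn hqtend hconv t C₃ hC₃ htbound Φn hΦn Φhat hΦhat
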